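/- arXiv:1903.04148 — 2 statements merged into one kernel-verified Lean document; each statement's English description precedes it below -/
import Mathlib

section
/- Every spherically convex body C ⊂ S^2 of diameter π/2 contains a pair of extreme points at spherical distance π/2 from each other. -/
open scoped RealInnerProductSpace

noncomputable section

namespace SphericalGeom

/-- Euclidean space `E^n`. -/
abbrev Esp (n : ℕ) : Type := EuclideanSpace ℝ (Fin n)

/-- The unit sphere centered at the origin of `E^n` (so `S^d` for `n = d+1`). -/
def unitSphere (n : ℕ) : Set (Esp n) := Metric.sphere 0 1

/-- Spherical (geodesic) distance between points of the unit sphere. -/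
def sdist {n : ℕ} (a b : Esp n) : ℝ := Real.arccos ⟪a, b⟫

/-- The hemisphere `H(c)` with center `c`: points of the sphere within spherical
distance `π/2` from `c`. -/
def hemi {n : ℕ} (c : Esp n) : Set (Esp n) :=
  {x ∈ unitSphere n | sdist c x ≤ Real.pi / 2}

/-- The boundary great subsphere of the hemisphere centered at `c`. -/
def hemiBd {n : ℕ} (c : Esp n) : Set (Esp n) :=
  {x ∈ unitSphere n | sdist c x = Real.pi / 2}

/-- The spherical arc connecting `a` and `b` (for non-antipodal `a b` of the sphere,
this is the shorter great-circle arc joining them). -/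
def arc {n : ℕ} (a b : Esp n) : Set (Esp n) :=
  {z | ∃ s t : ℝ, 0 ≤ s ∧ 0 ≤ t ∧ s • a + t • b ≠ 0 ∧
    z = ‖s • a + t • b‖⁻¹ • (s • a + t • b)}

/-- A subset of the sphere, containing no pair of antipodes, which together with
every two of its points contains the arc connecting them. -/
def IsSphConvex {n : ℕ} (C : Set (Esp n)) : Prop :=
  C ⊆ unitSphere n ∧ (∀ x ∈ C, -x ∉ C) ∧ ∀ a ∈ C, ∀ b ∈ C, arc a b ⊆ C

/-- A spherically convex body: a closed spherically convex set with nonempty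
interior relative to the sphere. -/
def IsSphConvexBody {n : ℕ} (C : Set (Esp n)) : Prop :=
  IsClosed C ∧ IsSphConvex C ∧
    ∃ x ∈ C, ∃ ε : ℝ, 0 < ε ∧ Metric.ball x ε ∩ unitSphere n ⊆ C

/-- The hemisphere centered at `k` supports `C`: it contains `C` and its boundary
meets `C`. -/
def Supports {n : ℕ} (k : Esp n) (C : Set (Esp n)) : Prop :=
  k ∈ unitSphere n ∧ C ⊆ hemi k ∧ ∃ p ∈ C, sdist k p = Real.pi / 2

/-- The hemispheres centered at `g` and `h` are different and not opposite, so that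
`H(g) ∩ H(h)` is a lune. -/
def IsLunePair {n : ℕ} (g h : Esp n) : Prop :=
  g ∈ unitSphere n ∧ h ∈ unitSphere n ∧ g ≠ h ∧ g ≠ -h

/-- The center of the bounding `(d-1)`-dimensional hemisphere `H(g)/H(h)` of the
lune `H(g) ∩ H(h)`: the normalized projection of `h` onto the hyperplane `g^⊥`. -/
def luneFaceCenter {n : ℕ} (g h : Esp n) : Esp n :=
  ‖h - ⟪g, h⟫ • g‖⁻¹ • (h - ⟪g, h⟫ • g)

/-- The thickness of the lune `H(g) ∩ H(h)`: the spherical distance between the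
centers of its two bounding hemispheres. -/
def luneThickness {n : ℕ} (g h : Esp n) : ℝ :=
  sdist (luneFaceCenter g h) (luneFaceCenter h g)

/-- The set of corners of the lune `H(g) ∩ H(h)`, i.e. `(G/H) ∩ (H/G)`. -/
def luneCorners {n : ℕ} (g h : Esp n) : Set (Esp n) := hemiBd g ∩ hemiBd h

/-- The width of `C` determined by the supporting hemisphere `H(k)`: the minimum
thickness of a lune `H(k) ∩ K'` over all hemispheres `K' ≠ H(k)` supporting `C`. -/
def widthAt {n : ℕ} (C : Set (Esp n)) (k : Esp n) : ℝ :=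
  sInf {t | ∃ k', Supports k' C ∧ k' ≠ k ∧ k' ≠ -k ∧ t = luneThickness k k'}

/-- The thickness `Δ(C)`: the minimum of `width_K(C)` over supporting hemispheres. -/
def thickness {n : ℕ} (C : Set (Esp n)) : ℝ :=
  sInf {t | ∃ k, Supports k C ∧ t = widthAt C k}

/-- The spherical diameter: the maximum spherical distance of two points of `C`. -/
def sdiam {n : ℕ} (C : Set (Esp n)) : ℝ :=
  sSup {t | ∃ p ∈ C, ∃ q ∈ C, t = sdist p q}

/-- `C` is of constant width `w`. -/
def IsConstWidth {n : ℕ} (C : Set (Esp n)) (w : ℝ) : Prop :=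
  ∀ k, Supports k C → widthAt C k = w

/-- A reduced body: every convex body properly contained in it has strictly
smaller thickness. -/
def IsReduced {n : ℕ} (R : Set (Esp n)) : Prop :=
  IsSphConvexBody R ∧ ∀ Z : Set (Esp n), IsSphConvexBody Z → Z ⊆ R → Z ≠ R →
    thickness Z < thickness R

/-- `e` is an extreme point of the convex body `C`: `C \ {e}` is convex. -/
def IsExtremePt {n : ℕ} (C : Set (Esp n)) (e : Esp n) : Prop :=
  e ∈ C ∧ IsSphConvex (C \ {e})

/-- The boundary of `C` relative to the sphere. -/
def sphBoundary {n : ℕ} (C : Set (Esp n)) : Set (Esp n) :=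
  closure C ∩ closure (unitSphere n \ C)

/-- `D` is of constant diameter `δ`: its diameter equals `δ` and every boundary
point realizes the distance `δ` to some boundary point. -/
def IsConstDiameter {n : ℕ} (D : Set (Esp n)) (δ : ℝ) : Prop :=
  sdiam D = δ ∧ ∀ p ∈ sphBoundary D, ∃ p' ∈ sphBoundary D, sdist p p' = δ

end SphericalGeom

open SphericalGeom Real

/-!
Diameter `π/2` means that all inner products of points of `C` are nonnegative and that some
`p, q ∈ C` are orthogonal. Given such `p, q`, a minimizer `e` of `⟪p, ·⟫` on the face `C ∩ q^⊥`
is extreme: were `e` interior to an arc `ab` with `a, b ∈ C`, then `a, b` would lie in the face,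
strict convexity of the norm would force `⟪p, e⟫ = 0`, hence `a, b ∈ {p, q}^⊥`, a line of `ℝ³`,
so `b = ±a`, which is absurd. This gives an extreme point `e ⊥ q`; applied to `(q, e)` it gives
an extreme point `f ⊥ e`.
-/

namespace SphericalGeom

lemma IsSphConvex.norm_eq_one {n : ℕ} {C : Set (Esp n)} (hC : IsSphConvex C) {x : Esp n}
    (hx : x ∈ C) : ‖x‖ = 1 :=
  mem_sphere_zero_iff_norm.1 (hC.1 hx)

lemma sdist_le_pi_div_two_iff {n : ℕ} {a b : Esp n} : sdist a b ≤ π / 2 ↔ 0 ≤ ⟪a, b⟫ :=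
  arccos_le_pi_div_two

lemma sdist_eq_pi_div_two_iff {n : ℕ} {a b : Esp n} : sdist a b = π / 2 ↔ ⟪a, b⟫ = 0 :=
  arccos_eq_pi_div_two

lemma sdist_le_sdiam {n : ℕ} {C : Set (Esp n)} {x y : Esp n} (hx : x ∈ C) (hy : y ∈ C) :
    sdist x y ≤ sdiam C :=
  le_csSup ⟨π, by rintro _ ⟨p, -, q, -, rfl⟩; exact arccos_le_pi _⟩ ⟨x, hx, y, hy, rfl⟩

lemma exists_sdist_eq_sdiam {n : ℕ} {C : Set (Esp n)} (hC : IsCompact C) (hne : C.Nonempty) :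
    ∃ p ∈ C, ∃ q ∈ C, sdist p q = sdiam C := by
  have himage : {t | ∃ p ∈ C, ∃ q ∈ C, t = sdist p q} =
      (fun x : Esp n × Esp n => sdist x.1 x.2) '' (C ×ˢ C) := by
    ext t
    simp [eq_comm]
  have hcont : Continuous fun x : Esp n × Esp n => sdist x.1 x.2 :=
    continuous_arccos.comp (continuous_fst.inner continuous_snd)
  have hmem := ((hC.prod hC).image hcont).sSup_mem ((hne.prod hne).image _)
  rw [← himage] at hmem
  obtain ⟨p, hp, q, hq, hpq⟩ := hmem
  exact ⟨p, hp, q, hq, hpq.symm⟩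

lemma isExtremePt_of_forall_notMem_arc {n : ℕ} {C : Set (Esp n)} {e : Esp n}
    (hC : IsSphConvex C) (he : e ∈ C)
    (h : ∀ a ∈ C, ∀ b ∈ C, a ≠ e → b ≠ e → e ∉ arc a b) : IsExtremePt C e :=
  ⟨he, fun _ hx => hC.1 hx.1, fun x hx hnx => hC.2.1 x hx.1 hnx.1,
    fun a ha b hb _ hz => ⟨hC.2.2 a ha.1 b hb.1 hz, fun hze => h a ha.1 b hb.1 ha.2 hb.2 (hze ▸ hz)⟩⟩

lemma exists_pos_of_mem_arc {n : ℕ} {a b z : Esp n} (ha : ‖a‖ = 1) (hb : ‖b‖ = 1)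
    (hz : z ∈ arc a b) (hza : z ≠ a) (hzb : z ≠ b) :
    ∃ s t : ℝ, 0 < s ∧ 0 < t ∧ a ≠ b ∧ ‖s • a + t • b‖ • z = s • a + t • b := by
  obtain ⟨s, t, hs, ht, hw, rfl⟩ := hz
  have hnormalize : ∀ c : ℝ, 0 < c → ∀ u : Esp n, ‖u‖ = 1 → ‖c • u‖⁻¹ • (c • u) = u := by
    intro c hc u hu
    rw [norm_smul, hu, mul_one, norm_of_nonneg hc.le, inv_smul_smul₀ hc.ne']
  have hs' : 0 < s := by
    refine hs.lt_of_ne fun hs0 => hzb ?_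
    subst hs0
    simp only [zero_smul, zero_add] at hw ⊢
    exact hnormalize t (ht.lt_of_ne fun ht0 => hw (by rw [← ht0, zero_smul])) b hb
  have ht' : 0 < t := by
    refine ht.lt_of_ne fun ht0 => hza ?_
    subst ht0
    simp only [zero_smul, add_zero] at hw ⊢
    exact hnormalize s hs' a ha
  refine ⟨s, t, hs', ht', ?_, smul_inv_smul₀ (norm_ne_zero_iff.2 hw) _⟩
  rintro rfl
  apply hza
  rw [← add_smul]
  exact hnormalize _ (add_pos hs' ht') a ha

lemma norm_smul_add_smul_lt {E : Type*} [NormedAddCommGroup E] [NormedSpace ℝ E]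
    [StrictConvexSpace ℝ E] {a b : E} (ha : ‖a‖ = 1) (hb : ‖b‖ = 1) (hab : a ≠ b)
    {s t : ℝ} (hs : 0 < s) (ht : 0 < t) : ‖s • a + t • b‖ < s + t := by
  have hsa : s • a ≠ 0 := smul_ne_zero hs.ne' (by rintro rfl; simp at ha)
  have htb : t • b ≠ 0 := smul_ne_zero ht.ne' (by rintro rfl; simp at hb)
  have hray : ¬SameRay ℝ (s • a) (t • b) := fun h =>
    hab <| (((SameRay.sameRay_pos_smul_right a hs).trans h fun h0 => absurd h0 hsa).trans
      (SameRay.sameRay_pos_smul_left b ht) fun h0 => absurd h0 htb).eq_of_norm_eq (ha.trans hb.symm)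
  calc ‖s • a + t • b‖ < ‖s • a‖ + ‖t • b‖ := norm_add_lt_of_not_sameRay hray
    _ = s + t := by rw [norm_smul, norm_smul, ha, hb, norm_of_nonneg hs.le, norm_of_nonneg ht.le,
      mul_one, mul_one]

lemma eq_zero_of_mul_add_mul_eq_zero {s t x y : ℝ} (hs : 0 < s) (ht : 0 < t) (hx : 0 ≤ x)
    (hy : 0 ≤ y) (h : s * x + t * y = 0) : x = 0 ∧ y = 0 := by
  constructor <;> nlinarith [mul_nonneg hs.le hx, mul_nonneg ht.le hy]

lemma eq_or_eq_neg_of_inner_eq_zero {E : Type*} [NormedAddCommGroup E] [InnerProductSpace ℝ E]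
    (hE : Module.finrank ℝ E = 3) {p q a b : E} (hv : Orthonormal ℝ ![p, q, a]) (hb : ‖b‖ = 1)
    (hpb : ⟪p, b⟫ = 0) (hqb : ⟪q, b⟫ = 0) : b = a ∨ b = -a := by
  have : FiniteDimensional ℝ E := Module.finite_of_finrank_eq_succ hE
  let B := OrthonormalBasis.mk hv
    (hv.linearIndependent.span_eq_top_of_card_eq_finrank (by simp [hE])).ge
  have hba : b = ⟪a, b⟫ • a := by
    simpa [B, Fin.sum_univ_three, hpb, hqb] using (B.sum_repr' b).symm
  have ha : ‖a‖ = 1 := hv.1 2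
  have habs : |⟪a, b⟫| = 1 := by
    simpa [norm_smul, ha, hb] using (congrArg norm hba).symm
  rcases abs_eq zero_le_one |>.1 habs with h | h
  · left; rw [hba, h, one_smul]
  · right; rw [hba, h, neg_one_smul]

theorem exists_isExtremePt_inner_eq_zero {C : Set (Esp 3)} (hcpt : IsCompact C)
    (hC : IsSphConvex C) {p q : Esp 3} (hp : p ∈ C) (hq : ‖q‖ = 1) (hqp : ⟪q, p⟫ = 0)
    (hpC : ∀ x ∈ C, 0 ≤ ⟪p, x⟫) (hqC : ∀ x ∈ C, 0 ≤ ⟪q, x⟫) :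
    ∃ e, IsExtremePt C e ∧ ⟪q, e⟫ = 0 := by
  have hunit : ∀ x ∈ C, ‖x‖ = 1 := fun _ => hC.norm_eq_one
  have hface : IsCompact {x ∈ C | ⟪q, x⟫ = 0} :=
    hcpt.inter_right (isClosed_eq (continuous_const.inner continuous_id) continuous_const)
  obtain ⟨e, ⟨heC, hqe⟩, hmin⟩ := hface.exists_isMinOn ⟨p, hp, hqp⟩
    (continuous_const.inner continuous_id : Continuous fun x : Esp 3 => ⟪p, x⟫).continuousOn
  refine ⟨e, isExtremePt_of_forall_notMem_arc hC heC fun a ha b hb hae hbe he => ?_, hqe⟩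
  obtain ⟨s, t, hs, ht, hab, hw⟩ :=
    exists_pos_of_mem_arc (hunit a ha) (hunit b hb) he (Ne.symm hae) (Ne.symm hbe)
  have hinner : ∀ v, ‖s • a + t • b‖ * ⟪v, e⟫ = s * ⟪v, a⟫ + t * ⟪v, b⟫ := fun v => by
    rw [← real_inner_smul_right, hw, inner_add_right, real_inner_smul_right, real_inner_smul_right]
  obtain ⟨hqa, hqb⟩ := eq_zero_of_mul_add_mul_eq_zero hs ht (hqC a ha) (hqC b hb)
    (by rw [← hinner, hqe, mul_zero])
  have hmina : ⟪p, e⟫ ≤ ⟪p, a⟫ := hmin ⟨ha, hqa⟩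
  have hminb : ⟪p, e⟫ ≤ ⟪p, b⟫ := hmin ⟨hb, hqb⟩
  have hlt := norm_smul_add_smul_lt (hunit a ha) (hunit b hb) hab hs ht
  -- `‖s • a + t • b‖ ⟪p, e⟫ ≥ (s + t) ⟪p, e⟫` together with `‖s • a + t • b‖ < s + t`
  have hpe : ⟪p, e⟫ = 0 := by nlinarith [hinner p, hpC e heC]
  obtain ⟨hpa, hpb⟩ := eq_zero_of_mul_add_mul_eq_zero hs ht (hpC a ha) (hpC b hb)
    (by rw [← hinner, hpe, mul_zero])
  have hpqa : Orthonormal ℝ ![p, q, a] := by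
    simp [orthonormal_vecCons_iff, Fin.forall_fin_succ, hunit p hp, hq, hunit a ha, hpa, hqa,
      real_inner_comm p q ▸ hqp]
  rcases eq_or_eq_neg_of_inner_eq_zero finrank_euclideanSpace_fin hpqa (hunit b hb) hpb hqb
    with rfl | rfl
  · exact hab rfl
  · exact hC.2.1 a ha hb

end SphericalGeom

/-- Every spherically convex body `C ⊂ S^2` of diameter `π/2` contains
a pair of extreme points at spherical distance `π/2`. -/
theorem exists_extreme_pair_S2 (C : Set (Esp 3)) (hC : IsSphConvexBody C)
    (hdiam : sdiam C = Real.pi / 2) :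
    ∃ p q : Esp 3, IsExtremePt C p ∧ IsExtremePt C q ∧
      sdist p q = Real.pi / 2 := by
  obtain ⟨hcl, hconv, x, hx, -⟩ := hC
  have hcpt : IsCompact C := (isCompact_sphere 0 1).of_isClosed_subset hcl hconv.1
  have hunit : ∀ x ∈ C, ‖x‖ = 1 := fun _ => hconv.norm_eq_one
  have hnonneg : ∀ x ∈ C, ∀ y ∈ C, 0 ≤ ⟪x, y⟫ := fun x hx y hy =>
    sdist_le_pi_div_two_iff.1 (hdiam ▸ sdist_le_sdiam hx hy)
  obtain ⟨p, hp, q, hq, hpq⟩ := exists_sdist_eq_sdiam hcpt ⟨x, hx⟩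
  rw [hdiam, sdist_eq_pi_div_two_iff, real_inner_comm] at hpq
  obtain ⟨e, he, hqe⟩ := exists_isExtremePt_inner_eq_zero hcpt hconv hp (hunit q hq) hpq
    (hnonneg p hp) (hnonneg q hq)
  obtain ⟨f, hf, hef⟩ := exists_isExtremePt_inner_eq_zero hcpt hconv hq (hunit e he.1)
    (by rwa [real_inner_comm]) (hnonneg q hq) (hnonneg e he.1)
  exact ⟨e, f, he, hf, sdist_eq_pi_div_two_iff.2 hef⟩
end
end

section
/- If a reduced spherically convex body R ⊂ S^d fulfills Δ(R) ≥ π/2, then R is a body of constant width Δ(R), i.e. width_K(R) = Δ(R) for every hemisphere K supporting R. -/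
open scoped RealInnerProductSpace

noncomputable section

open SphericalGeom Real

/-! Suppose a supporting hemisphere `H(k₀)` of `R` had `width_{H(k₀)}(R) > Δ(R) ≥ π/2`. Since the
lune `H(g) ∩ H(h)` has thickness `π - sdist g h`, unit vectors of the dual cone `R*` are pairwise
at distance at most `π - Δ(R)` and lie within `π - width_{H(k₀)}(R) < π - Δ(R)` of `k₀` (rotate
a dual vector away from the other one until it supports `R`). Cutting `R` by the slab
`{ε ≤ ⟪x, k₀⟫}` gives, for small `ε`, a convex body `Z ⊊ R`; by reducedness `Δ(Z) < Δ(R)`, so two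
supporting hemispheres `H(g)`, `H(w)` of `Z` satisfy `sdist g w > π - Δ(R)`. By Farkas' lemma `Z*`
lies in the closed cone generated by `R*` and a small ball around `k₀`, and because
`cos (π - Δ(R)) ≥ 0` the bound `⟪a, b⟫ ≥ cos (π - Δ(R)) ‖a‖ ‖b‖` passes from these generators to
the whole cone, a contradiction. -/

open NormedSpace (normalize)
open ProperCone (innerDual)

namespace SphericalGeom

section InnerProductSpace

variable {E : Type*} [NormedAddCommGroup E] [InnerProductSpace ℝ E]

lemma norm_cos_smul_add_sin_smul {u p : E} (hu : ‖u‖ = 1) (hp : ‖p‖ = 1) (hup : ⟪u, p⟫ = 0)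
    (θ : ℝ) : ‖cos θ • u + sin θ • p‖ = 1 := by
  have h := norm_add_sq_eq_norm_sq_add_norm_sq_real
    (by rw [real_inner_smul_left, real_inner_smul_right, hup, mul_zero, mul_zero] :
      ⟪cos θ • u, sin θ • p⟫ = 0)
  rw [norm_smul, norm_smul, hu, hp, Real.norm_eq_abs, Real.norm_eq_abs, mul_one, mul_one,
    abs_mul_abs_self, abs_mul_abs_self] at h
  nlinarith [norm_nonneg (cos θ • u + sin θ • p), cos_sq_add_sin_sq θ]

lemma exists_forall_inner_cos_smul_add_sin_smul {u v : E} (hu : ‖u‖ = 1) (hv : ‖v‖ = 1)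
    {a : ℝ} (hs : 0 < sin a) (hca : cos a = ⟪v, u⟫) :
    ∃ p : E, ‖p‖ = 1 ∧ ⟪u, p⟫ = 0 ∧ ∀ θ, ⟪v, cos θ • u + sin θ • p⟫ = cos (θ + a) := by
  have hvu : ⟪u, v⟫ = cos a := by rw [real_inner_comm, hca]
  have huu : ⟪u, u⟫ = 1 := inner_self_eq_one_of_norm_eq_one hu
  have hvv : ⟪v, v⟫ = 1 := inner_self_eq_one_of_norm_eq_one hv
  have hnorm : ‖cos a • u - v‖ = sin a := by
    refine (sq_eq_sq₀ (norm_nonneg _) hs.le).mp ?_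
    rw [← real_inner_self_eq_norm_sq, sin_sq]
    simp only [inner_sub_left, inner_sub_right, real_inner_smul_left, real_inner_smul_right,
      huu, hvv, hvu, ← hca]
    ring
  refine ⟨(sin a)⁻¹ • (cos a • u - v), ?_, ?_, fun θ => ?_⟩
  · rw [norm_smul, hnorm, norm_inv, Real.norm_of_nonneg hs.le, inv_mul_cancel₀ hs.ne']
  · rw [real_inner_smul_right, inner_sub_right, real_inner_smul_right, huu, hvu]
    ring
  · have hvp : ⟪v, (sin a)⁻¹ • (cos a • u - v)⟫ = -sin a := by
      rw [real_inner_smul_right, inner_sub_right, real_inner_smul_right, ← hca, hvv]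
      field_simp
      nlinarith [sin_sq_add_cos_sq a]
    rw [inner_add_right, real_inner_smul_right, real_inner_smul_right, hvp, cos_add, ← hca]
    ring

lemma mul_norm_le_inner_of_normalize {γ : ℝ} {p q : E}
    (h : p ≠ 0 → q ≠ 0 → γ ≤ ⟪normalize p, normalize q⟫) : γ * (‖p‖ * ‖q‖) ≤ ⟪p, q⟫ := by
  rcases eq_or_ne p 0 with rfl | hp
  · simp
  rcases eq_or_ne q 0 with rfl | hq
  · simp
  have hpq : ⟪p, q⟫ = ‖p‖ * ‖q‖ * ⟪normalize p, normalize q⟫ := by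
    conv_lhs => rw [← NormedSpace.norm_smul_normalize p, ← NormedSpace.norm_smul_normalize q]
    rw [real_inner_smul_left, real_inner_smul_right]
    ring
  rw [hpq, mul_comm γ]
  exact mul_le_mul_of_nonneg_left (h hp hq) (by positivity)

/-- For `γ ≥ 0`, the set of `a` with `γ ‖a‖ ‖b‖ ≤ ⟪a, b⟫` is a closed convex cone. -/
lemma mul_norm_le_inner_of_mem_closure_hull_left {S : Set E} {γ : ℝ} (hγ : 0 ≤ γ) (b : E)
    (hS : ∀ p ∈ S, γ * (‖p‖ * ‖b‖) ≤ ⟪p, b⟫) :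
    ∀ a ∈ closure (PointedCone.hull ℝ S : Set E), γ * (‖a‖ * ‖b‖) ≤ ⟪a, b⟫ := by
  have hclosed : IsClosed {a : E | γ * (‖a‖ * ‖b‖) ≤ ⟪a, b⟫} :=
    isClosed_le (by fun_prop) (by fun_prop)
  refine fun a ha => closure_minimal (fun x hx => ?_) hclosed ha
  induction hx using Submodule.span_induction with
  | mem x hx => exact hS x hx
  | zero => simp
  | add x y _ _ hx hy =>
    have hx : γ * (‖x‖ * ‖b‖) ≤ ⟪x, b⟫ := hx
    have hy : γ * (‖y‖ * ‖b‖) ≤ ⟪y, b⟫ := hy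
    show γ * (‖x + y‖ * ‖b‖) ≤ ⟪x + y, b⟫
    rw [inner_add_left]
    nlinarith [mul_le_mul_of_nonneg_left (norm_add_le x y) (mul_nonneg hγ (norm_nonneg b))]
  | smul c x _ hx =>
    have hx : γ * (‖x‖ * ‖b‖) ≤ ⟪x, b⟫ := hx
    show γ * (‖c • x‖ * ‖b‖) ≤ ⟪c • x, b⟫
    rw [← Nonneg.coe_smul, norm_smul, real_inner_smul_left, Real.norm_of_nonneg c.2]
    nlinarith [mul_le_mul_of_nonneg_left hx c.2]

lemma mul_norm_le_inner_of_mem_closure_hull {S : Set E} {γ : ℝ} (hγ : 0 ≤ γ)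
    (hS : ∀ p ∈ S, ∀ q ∈ S, γ * (‖p‖ * ‖q‖) ≤ ⟪p, q⟫) {a b : E}
    (ha : a ∈ closure (PointedCone.hull ℝ S : Set E))
    (hb : b ∈ closure (PointedCone.hull ℝ S : Set E)) :
    γ * (‖a‖ * ‖b‖) ≤ ⟪a, b⟫ := by
  have hSa : ∀ q ∈ S, γ * (‖q‖ * ‖a‖) ≤ ⟪q, a⟫ := fun q hq => by
    rw [mul_comm ‖q‖, real_inner_comm]
    exact mul_norm_le_inner_of_mem_closure_hull_left hγ q (fun p hp => hS p hp q hq) a ha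
  rw [mul_comm ‖a‖, real_inner_comm]
  exact mul_norm_le_inner_of_mem_closure_hull_left hγ a hSa b hb

lemma mul_norm_le_inner_of_mem_closedBall {k c c' : E} (hk : ‖k‖ = 1) {γ ε : ℝ} (hγ : 0 ≤ γ)
    (hε : 0 ≤ ε) (hγε : γ + 4 * ε ≤ 1) (hc : c ∈ Metric.closedBall k ε)
    (hc' : c' ∈ Metric.closedBall k ε) : γ * (‖c‖ * ‖c'‖) ≤ ⟪c, c'⟫ := by
  rw [mem_closedBall_iff_norm] at hc hc'
  have hlow : ∀ {x : E}, ‖x - k‖ ≤ ε → 1 - ε ≤ ‖x‖ := fun {x} hx => by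
    have := norm_sub_norm_le k x
    rw [norm_sub_rev, hk] at this
    linarith
  have hcc' : ‖c - c'‖ ≤ 2 * ε := by
    calc ‖c - c'‖ = ‖(c - k) - (c' - k)‖ := by rw [sub_sub_sub_cancel_right]
      _ ≤ ‖c - k‖ + ‖c' - k‖ := norm_sub_le _ _
      _ ≤ 2 * ε := by linarith
  have hpar : 2 * ⟪c, c'⟫ = ‖c‖ ^ 2 + ‖c'‖ ^ 2 - ‖c - c'‖ ^ 2 := by
    rw [norm_sub_sq_real]
    ring
  have h₁ := hlow hc
  have h₂ := hlow hc'
  have hprod : 9 / 16 ≤ ‖c‖ * ‖c'‖ := by nlinarith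
  nlinarith [sq_nonneg (‖c‖ - ‖c'‖), mul_le_mul_of_nonneg_right (by linarith : 4 * ε ≤ 1 - γ)
    (by linarith : (0 : ℝ) ≤ ‖c‖ * ‖c'‖), pow_le_pow_left₀ (norm_nonneg _) hcc' 2]

lemma mul_norm_le_inner_of_mem_closedBall_right {k p c : E} (hk : ‖k‖ = 1) {γ ε : ℝ} (hγ : 0 ≤ γ)
    (hε : 0 ≤ ε) (hγε : γ + 4 * ε ≤ 1) (hp : (γ + 2 * ε) * ‖p‖ ≤ ⟪p, k⟫)
    (hc : c ∈ Metric.closedBall k ε) : γ * (‖p‖ * ‖c‖) ≤ ⟪p, c⟫ := by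
  rw [mem_closedBall_iff_norm] at hc
  have hcn : ‖c‖ ≤ 1 + ε := by
    have := norm_le_norm_add_norm_sub' c k
    rw [hk] at this
    linarith
  have hpc : -(‖p‖ * ε) ≤ ⟪p, c - k⟫ := by
    have := abs_real_inner_le_norm p (c - k)
    nlinarith [abs_le.mp this, mul_le_mul_of_nonneg_left hc (norm_nonneg p)]
  rw [inner_sub_right] at hpc
  nlinarith [mul_le_mul_of_nonneg_left hcn (mul_nonneg hγ (norm_nonneg p)),
    mul_le_mul_of_nonneg_right (by linarith : γ ≤ 1) (mul_nonneg hε (norm_nonneg p))]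

lemma mul_norm_le_inner_of_mem_closure_hull_union_closedBall {S : Set E} {k : E} (hk : ‖k‖ = 1)
    {γ ε : ℝ} (hγ : 0 ≤ γ) (hε : 0 ≤ ε) (hγε : γ + 4 * ε ≤ 1)
    (hS : ∀ p ∈ S, ∀ q ∈ S, γ * (‖p‖ * ‖q‖) ≤ ⟪p, q⟫)
    (hSk : ∀ p ∈ S, (γ + 2 * ε) * ‖p‖ ≤ ⟪p, k⟫) {a b : E}
    (ha : a ∈ closure (PointedCone.hull ℝ (S ∪ Metric.closedBall k ε) : Set E))
    (hb : b ∈ closure (PointedCone.hull ℝ (S ∪ Metric.closedBall k ε) : Set E)) :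
    γ * (‖a‖ * ‖b‖) ≤ ⟪a, b⟫ := by
  refine mul_norm_le_inner_of_mem_closure_hull hγ ?_ ha hb
  rintro p (hp | hp) q (hq | hq)
  · exact hS p hp q hq
  · exact mul_norm_le_inner_of_mem_closedBall_right hk hγ hε hγε (hSk p hp) hq
  · rw [mul_comm ‖p‖, real_inner_comm]
    exact mul_norm_le_inner_of_mem_closedBall_right hk hγ hε hγε (hSk q hq) hp
  · exact mul_norm_le_inner_of_mem_closedBall hk hγ hε hγε hp hq

lemma isClosed_setOf_eq_zero_or_normalize_mem {R : Set E} (hR : IsClosed R) :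
    IsClosed {z : E | z = 0 ∨ normalize z ∈ R} := by
  have hcont : ContinuousOn (normalize : E → E) {z | z ≠ 0} := fun z hz =>
    ((continuous_norm.continuousAt.inv₀ (norm_ne_zero_iff.mpr hz)).smul
      continuousAt_id).continuousWithinAt
  have := hcont.isOpen_inter_preimage isOpen_ne hR.isOpen_compl
  rw [← isOpen_compl_iff]
  convert this using 1
  ext z
  simp

variable [CompleteSpace E]

lemma exists_mem_innerDual_inner_eq_zero {C : Set E} (hC : IsCompact C) {f : ℝ → E}
    (hf : Continuous f) {a b : ℝ} (hab : a ≤ b) (ha : f a ∈ innerDual C)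
    (hb : f b ∉ innerDual C) :
    ∃ θ ∈ Set.Ico a b, f θ ∈ innerDual C ∧ ∃ x ∈ C, ⟪x, f θ⟫ = 0 := by
  obtain ⟨x₀, hx₀, hx₀b⟩ : ∃ x ∈ C, ⟪x, f b⟫ < 0 := by
    simpa [ProperCone.mem_innerDual] using hb
  have hCne : C.Nonempty := ⟨x₀, hx₀⟩
  have hcont : ∀ θ, Continuous fun x => ⟪x, f θ⟫ := fun θ => by fun_prop
  have hbdd : ∀ θ, BddBelow ((fun x => ⟪x, f θ⟫) '' C) :=
    fun θ => (hC.image (hcont θ)).bddBelow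
  set m : ℝ → ℝ := fun θ => sInf ((fun x => ⟪x, f θ⟫) '' C)
  have hm : Continuous m := hC.continuous_sInf (f := fun θ x => ⟪x, f θ⟫) (by fun_prop)
  have hma : 0 ≤ m a := le_csInf (hCne.image _) (by
    rintro _ ⟨x, hx, rfl⟩
    exact ha hx)
  have hmb : m b < 0 := (csInf_le (hbdd b) ⟨x₀, hx₀, rfl⟩).trans_lt hx₀b
  obtain ⟨θ, hθ, hmθ⟩ := intermediate_value_Icc' hab hm.continuousOn ⟨hmb.le, hma⟩
  refine ⟨θ, ⟨hθ.1, lt_of_le_of_ne hθ.2 (by rintro rfl; linarith)⟩, fun x hx => ?_, ?_⟩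
  · rw [← hmθ]
    exact csInf_le (hbdd θ) ⟨x, hx, rfl⟩
  · obtain ⟨x, hx, hxm⟩ := (hC.image (hcont θ)).sInf_mem (hCne.image _)
    exact ⟨x, hx, hxm.trans hmθ⟩

lemma mul_norm_le_inner_of_mem_innerDual_closedBall {k y : E} {ε : ℝ} (hε : 0 ≤ ε)
    (hy : y ∈ innerDual (Metric.closedBall k ε)) : ε * ‖y‖ ≤ ⟪y, k⟫ := by
  rcases eq_or_ne y 0 with rfl | hy0
  · simp
  have hmem : k - ε • normalize y ∈ Metric.closedBall k ε := by
    rw [mem_closedBall_iff_norm, sub_sub_cancel_left, norm_neg, norm_smul,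
      NormedSpace.norm_normalize hy0, Real.norm_of_nonneg hε, mul_one]
  have := ProperCone.mem_innerDual.mp hy hmem
  rw [inner_sub_left, real_inner_smul_left, NormedSpace.normalize, real_inner_smul_left,
    real_inner_self_eq_norm_sq, real_inner_comm] at this
  have hyn : ‖y‖⁻¹ * ‖y‖ ^ 2 = ‖y‖ := by
    field_simp [norm_ne_zero_iff.mpr hy0]
  linarith [hyn ▸ this]

end InnerProductSpace

variable {n : ℕ}

lemma mem_unitSphere_iff {x : Esp n} : x ∈ unitSphere n ↔ ‖x‖ = 1 := mem_sphere_zero_iff_norm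

lemma sdist_comm (a b : Esp n) : sdist a b = sdist b a := by
  rw [sdist, sdist, real_inner_comm]

lemma sdist_self {a : Esp n} (ha : ‖a‖ = 1) : sdist a a = 0 := by
  rw [sdist, inner_self_eq_one_of_norm_eq_one ha, arccos_one]

lemma cos_sdist {a b : Esp n} (ha : ‖a‖ = 1) (hb : ‖b‖ = 1) : cos (sdist a b) = ⟪a, b⟫ :=
  cos_arccos (neg_one_le_real_inner_of_norm_eq_one ha hb) (real_inner_le_one_of_norm_eq_one ha hb)

lemma inner_luneFaceCenter {g h : Esp n} (hg : ‖g‖ = 1) (hh : ‖h‖ = 1) (hgh : g ≠ h)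
    (hgh' : g ≠ -h) : ⟪luneFaceCenter g h, luneFaceCenter h g⟫ = -⟪g, h⟫ := by
  set c := ⟪g, h⟫ with hc
  have hc1 : c < 1 := (inner_lt_one_iff_real_of_norm_eq_one hg hh).mpr hgh
  have hc2 : -1 < c := lt_of_le_of_ne (neg_one_le_real_inner_of_norm_eq_one hg hh)
    fun h' => hgh' ((inner_eq_neg_one_iff_of_norm_eq_one hg hh).mp h'.symm)
  have hgg : ⟪g, g⟫ = 1 := inner_self_eq_one_of_norm_eq_one hg
  have hhh : ⟪h, h⟫ = 1 := inner_self_eq_one_of_norm_eq_one hh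
  have hhg : ⟪h, g⟫ = c := real_inner_comm g h
  have ha : ‖h - c • g‖ ^ 2 = 1 - c ^ 2 := by
    rw [← real_inner_self_eq_norm_sq]
    simp only [inner_sub_left, inner_sub_right, real_inner_smul_left, real_inner_smul_right,
      hgg, hhh, hhg, ← hc]
    ring
  have hb : ‖g - c • h‖ ^ 2 = 1 - c ^ 2 := by
    rw [← real_inner_self_eq_norm_sq]
    simp only [inner_sub_left, inner_sub_right, real_inner_smul_left, real_inner_smul_right,
      hgg, hhh, hhg, ← hc]
    ring
  have hab : ‖h - c • g‖ * ‖g - c • h‖ = 1 - c ^ 2 :=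
    (sq_eq_sq₀ (by positivity) (by nlinarith)).mp (by rw [mul_pow, ha, hb]; ring)
  have hinner : ⟪h - c • g, g - c • h⟫ = -c * (1 - c ^ 2) := by
    simp only [inner_sub_left, inner_sub_right, real_inner_smul_left, real_inner_smul_right,
      hgg, hhh, hhg, ← hc]
    ring
  rw [luneFaceCenter, luneFaceCenter, hhg, real_inner_smul_left, real_inner_smul_right, hinner,
    ← mul_assoc, ← mul_inv, hab]
  field_simp [(by nlinarith : (1 - c ^ 2) ≠ 0)]

lemma luneThickness_eq {g h : Esp n} (hg : ‖g‖ = 1) (hh : ‖h‖ = 1) (hgh : g ≠ h)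
    (hgh' : g ≠ -h) : luneThickness g h = π - sdist g h := by
  rw [luneThickness, sdist, inner_luneFaceCenter hg hh hgh hgh', arccos_neg, sdist]

section Supports

variable {C : Set (Esp n)} {k : Esp n}

lemma Supports.norm_eq_one (h : Supports k C) : ‖k‖ = 1 := mem_unitSphere_iff.mp h.1

lemma Supports.mem_innerDual (h : Supports k C) : k ∈ innerDual C := fun x hx => by
  have := (h.2.1 hx).2
  rwa [sdist, arccos_le_pi_div_two, real_inner_comm] at this

lemma Supports.exists_inner_eq_zero (h : Supports k C) : ∃ p ∈ C, ⟪p, k⟫ = 0 := by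
  obtain ⟨p, hp, hpk⟩ := h.2.2
  rw [sdist, arccos_eq_pi_div_two, real_inner_comm] at hpk
  exact ⟨p, hp, hpk⟩

lemma supports_of_mem_innerDual (hC : C ⊆ unitSphere n) (hk : ‖k‖ = 1)
    (hkC : k ∈ innerDual C) {p : Esp n} (hp : p ∈ C) (hpk : ⟪p, k⟫ = 0) : Supports k C := by
  refine ⟨mem_unitSphere_iff.mpr hk, fun x hx => ⟨hC hx, ?_⟩, p, hp, ?_⟩
  · rw [sdist, arccos_le_pi_div_two, real_inner_comm]
    exact hkC hx
  · rw [sdist, arccos_eq_pi_div_two, real_inner_comm, hpk]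

lemma IsSphConvexBody.isCompact (hC : IsSphConvexBody C) : IsCompact C :=
  (isCompact_sphere 0 1).of_isClosed_subset hC.1 hC.2.1.1

lemma widthAt_nonneg (C : Set (Esp n)) (k : Esp n) : 0 ≤ widthAt C k :=
  Real.sInf_nonneg (by rintro _ ⟨k', -, -, -, rfl⟩; exact arccos_nonneg _)

lemma widthAt_le_pi (C : Set (Esp n)) (k : Esp n) : widthAt C k ≤ π := by
  rcases Set.eq_empty_or_nonempty
    {t | ∃ k', Supports k' C ∧ k' ≠ k ∧ k' ≠ -k ∧ t = luneThickness k k'} with h | ⟨t, ht⟩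
  · rw [widthAt, h, Real.sInf_empty]
    exact pi_pos.le
  · refine csInf_le_of_le ⟨0, ?_⟩ ht ?_
    · rintro _ ⟨k', -, -, -, rfl⟩
      exact arccos_nonneg _
    · obtain ⟨k', -, -, -, rfl⟩ := ht
      exact arccos_le_pi _

lemma thickness_nonneg (C : Set (Esp n)) : 0 ≤ thickness C :=
  Real.sInf_nonneg (by rintro _ ⟨k, -, rfl⟩; exact widthAt_nonneg _ _)

lemma thickness_le_widthAt (hk : Supports k C) : thickness C ≤ widthAt C k :=
  csInf_le ⟨0, by rintro _ ⟨k', -, rfl⟩; exact widthAt_nonneg _ _⟩ ⟨k, hk, rfl⟩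

lemma thickness_le_pi (C : Set (Esp n)) : thickness C ≤ π := by
  rcases Set.eq_empty_or_nonempty {t | ∃ k, Supports k C ∧ t = widthAt C k} with h | ⟨t, ht⟩
  · rw [thickness, h, Real.sInf_empty]
    exact pi_pos.le
  · obtain ⟨k, hk, rfl⟩ := ht
    exact (thickness_le_widthAt hk).trans (widthAt_le_pi C k)

lemma widthAt_le_luneThickness {k' : Esp n} (hk' : Supports k' C) (h : k' ≠ k) (h' : k' ≠ -k) :
    widthAt C k ≤ luneThickness k k' :=
  csInf_le ⟨0, by rintro _ ⟨k', -, -, -, rfl⟩; exact arccos_nonneg _⟩ ⟨k', hk', h, h', rfl⟩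

lemma exists_luneThickness_lt_of_thickness_lt {a : ℝ} (ha : thickness C < a) {v₁ v₂ : Esp n}
    (hv₁ : Supports v₁ C) (hv₂ : Supports v₂ C) (hv : v₁ ≠ v₂) (hv' : v₁ ≠ -v₂) :
    ∃ g w, Supports g C ∧ Supports w C ∧ w ≠ g ∧ w ≠ -g ∧ luneThickness g w < a := by
  obtain ⟨_, ⟨g, hg, rfl⟩, hga⟩ := exists_lt_of_csInf_lt (by exact ⟨_, v₁, hv₁, rfl⟩) ha
  have hne : ∃ v, Supports v C ∧ v ≠ g ∧ v ≠ -g := by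
    by_cases h₁ : v₁ = g ∨ v₁ = -g
    · refine ⟨v₂, hv₂, ?_, ?_⟩ <;> rintro rfl <;> rcases h₁ with rfl | rfl <;> simp_all
    · push Not at h₁
      exact ⟨v₁, hv₁, h₁⟩
  obtain ⟨v, hv, hvg, hvg'⟩ := hne
  obtain ⟨_, ⟨w, hw, hwg, hwg', rfl⟩, hwa⟩ :=
    exists_lt_of_csInf_lt (by exact ⟨_, v, hv, hvg, hvg', rfl⟩) hga
  exact ⟨g, w, hg, hw, hwg, hwg', hwa⟩

end Supports

lemma exists_supports_rotation {C : Set (Esp n)} (hC : IsCompact C) (hCs : C ⊆ unitSphere n)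
    {u p : Esp n} (hu : ‖u‖ = 1) (hp : ‖p‖ = 1) (hup : ⟪u, p⟫ = 0) (huC : u ∈ innerDual C)
    {b : ℝ} (hb0 : 0 ≤ b) (hb : cos b • u + sin b • p ∉ innerDual C) :
    ∃ θ ∈ Set.Ico 0 b, Supports (cos θ • u + sin θ • p) C := by
  obtain ⟨θ, hθ, hθC, x, hx, hx0⟩ := exists_mem_innerDual_inner_eq_zero hC
    (f := fun θ => cos θ • u + sin θ • p) (by fun_prop) hb0 (by simpa using huC) hb
  exact ⟨θ, hθ, supports_of_mem_innerDual hCs (norm_cos_smul_add_sin_smul hu hp hup θ) hθC hx hx0⟩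

/-- Rotating `u` in the plane of `u` and `v`, away from `v`, until it supports `R`. -/
lemma exists_supports_sdist_ge {R : Set (Esp n)} (hR : IsCompact R) (hRs : R ⊆ unitSphere n)
    {u v : Esp n} (hu : ‖u‖ = 1) (hv : ‖v‖ = 1) (huv : u ≠ v) (huv' : u ≠ -v)
    (huR : u ∈ innerDual R) (hvR : -v ∉ innerDual R) :
    ∃ k, Supports k R ∧ sdist v u ≤ sdist v k := by
  set a := sdist v u
  have ha0 : 0 < a := arccos_pos.mpr
    ((inner_lt_one_iff_real_of_norm_eq_one hv hu).mpr (Ne.symm huv))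
  have haπ : a < π := arccos_lt_pi.mpr <| lt_of_le_of_ne
    (neg_one_le_real_inner_of_norm_eq_one hv hu) fun h =>
      huv' (by rw [((inner_eq_neg_one_iff_of_norm_eq_one hv hu).mp h.symm), neg_neg])
  obtain ⟨p, hp, hup, hvp⟩ := exists_forall_inner_cos_smul_add_sin_smul hu hv
    (sin_pos_of_pos_of_lt_pi ha0 haπ) (cos_sdist hv hu)
  have hend : cos (π - a) • u + sin (π - a) • p = -v :=
    (inner_eq_neg_one_iff_of_norm_eq_one (norm_cos_smul_add_sin_smul hu hp hup _) hv).mp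
      (by rw [real_inner_comm, hvp, sub_add_cancel, cos_pi])
  obtain ⟨θ, hθ, hk⟩ := exists_supports_rotation hR hRs hu hp hup huR (by linarith)
    (hend ▸ hvR)
  refine ⟨_, hk, ?_⟩
  rw [sdist, hvp, arccos_cos (by linarith [hθ.1]) (by linarith [hθ.2])]
  linarith [hθ.1]

lemma neg_notMem_innerDual {R : Set (Esp n)} {x₀ v : Esp n} (hx₀ : x₀ ∈ R) (hv : 0 < ⟪x₀, v⟫) :
    -v ∉ innerDual R := fun h => by
  have := ProperCone.mem_innerDual.mp h hx₀
  rw [inner_neg_right] at this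
  linarith

lemma sdist_le_of_mem_innerDual {R : Set (Esp n)} (hR : IsCompact R) (hRs : R ⊆ unitSphere n)
    {v : Esp n} (hv : ‖v‖ = 1) (hvR : -v ∉ innerDual R) {b : ℝ} (hb : 0 ≤ b)
    (hsupp : ∀ k, Supports k R → k ≠ v → k ≠ -v → sdist v k ≤ b)
    {u : Esp n} (hu : ‖u‖ = 1) (huR : u ∈ innerDual R) : sdist v u ≤ b := by
  rcases eq_or_ne u v with rfl | huv
  · rwa [sdist_self hu]
  rcases eq_or_ne u (-v) with rfl | huv'
  · exact absurd huR hvR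
  obtain ⟨k, hk, hvk⟩ := exists_supports_sdist_ge hR hRs hu hv huv huv' huR hvR
  rcases eq_or_ne k v with rfl | hkv
  · rw [sdist_self hv] at hvk
    linarith
  rcases eq_or_ne k (-v) with rfl | hkv'
  · exact absurd hk.mem_innerDual hvR
  exact hvk.trans (hsupp k hk hkv hkv')

lemma exists_orthonormal_pair_orthogonal (hn : 3 ≤ n) (k : Esp n) :
    ∃ q₁ q₂ : Esp n, ‖q₁‖ = 1 ∧ ‖q₂‖ = 1 ∧ ⟪q₁, q₂⟫ = 0 ∧ ⟪k, q₁⟫ = 0 ∧ ⟪k, q₂⟫ = 0 := by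
  have hK : 2 ≤ Module.finrank ℝ (ℝ ∙ k)ᗮ := by
    have h₁ := Submodule.finrank_add_finrank_orthogonal (ℝ ∙ k)
    have h₂ : Module.finrank ℝ (ℝ ∙ k) ≤ 1 := (finrank_span_le_card {k}).trans (by simp)
    rw [finrank_euclideanSpace_fin] at h₁
    omega
  set b := stdOrthonormalBasis ℝ (ℝ ∙ k)ᗮ
  have hmem : ∀ i, ⟪k, (b i : Esp n)⟫ = 0 := fun i =>
    Submodule.mem_orthogonal_singleton_iff_inner_right.mp (b i).2
  refine ⟨b ⟨0, by omega⟩, b ⟨1, by omega⟩, b.orthonormal.1 _, b.orthonormal.1 _, ?_,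
    hmem _, hmem _⟩
  exact b.orthonormal.2 (by simp [Fin.ext_iff])

lemma exists_two_supports (hn : 3 ≤ n) {C : Set (Esp n)} (hC : IsCompact C)
    (hCs : C ⊆ unitSphere n) (hne : C.Nonempty) {k : Esp n} (hk : ‖k‖ = 1)
    (hpos : ∀ x ∈ C, 0 < ⟪x, k⟫) :
    ∃ v₁ v₂, Supports v₁ C ∧ Supports v₂ C ∧ v₁ ≠ v₂ ∧ v₁ ≠ -v₂ := by
  have hrot : ∀ q : Esp n, ‖q‖ = 1 → ⟪k, q⟫ = 0 →
      ∃ θ ∈ Set.Ioo 0 π, Supports (cos θ • k + sin θ • q) C := by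
    intro q hq hkq
    obtain ⟨x, hx⟩ := hne
    obtain ⟨θ, hθ, hθC⟩ := exists_supports_rotation hC hCs hk hq hkq
      (fun y hy => (hpos y hy).le) pi_pos.le fun h => by
        have := ProperCone.mem_innerDual.mp h hx
        simp only [cos_pi, sin_pi, neg_one_smul, zero_smul, add_zero, inner_neg_right] at this
        linarith [hpos x hx]
    refine ⟨θ, ⟨lt_of_le_of_ne hθ.1 ?_, hθ.2⟩, hθC⟩
    rintro rfl
    obtain ⟨p, hp, hp0⟩ := hθC.exists_inner_eq_zero
    simp only [cos_zero, sin_zero, one_smul, zero_smul, add_zero] at hp0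
    linarith [hpos p hp]
  obtain ⟨q₁, q₂, hq₁, hq₂, hq₁₂, hkq₁, hkq₂⟩ := exists_orthonormal_pair_orthogonal hn k
  obtain ⟨θ₁, hθ₁, hv₁⟩ := hrot q₁ hq₁ hkq₁
  obtain ⟨θ₂, -, hv₂⟩ := hrot q₂ hq₂ hkq₂
  have hsin : 0 < sin θ₁ := sin_pos_of_pos_of_lt_pi hθ₁.1 hθ₁.2
  have h₁ : ⟪q₁, cos θ₁ • k + sin θ₁ • q₁⟫ = sin θ₁ := by
    rw [inner_add_right, real_inner_smul_right, real_inner_smul_right, real_inner_comm,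
      hkq₁, inner_self_eq_one_of_norm_eq_one hq₁]
    ring
  have h₂ : ⟪q₁, cos θ₂ • k + sin θ₂ • q₂⟫ = 0 := by
    rw [inner_add_right, real_inner_smul_right, real_inner_smul_right, real_inner_comm,
      hkq₁, hq₁₂]
    ring
  refine ⟨_, _, hv₁, hv₂, fun h => ?_, fun h => ?_⟩
  · rw [h, h₂] at h₁
    linarith
  · rw [h, inner_neg_right, h₂] at h₁
    linarith

lemma le_inner_of_mem_arc {a b k : Esp n} (ha : ‖a‖ = 1) (hb : ‖b‖ = 1) {ε : ℝ} (hε : 0 ≤ ε)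
    (hak : ε ≤ ⟪a, k⟫) (hbk : ε ≤ ⟪b, k⟫) {z : Esp n} (hz : z ∈ arc a b) : ε ≤ ⟪z, k⟫ := by
  obtain ⟨s, t, hs, ht, hw, rfl⟩ := hz
  have hwn : ‖s • a + t • b‖ ≤ s + t := by
    refine (norm_add_le _ _).trans_eq ?_
    rw [norm_smul, norm_smul, ha, hb, Real.norm_of_nonneg hs, Real.norm_of_nonneg ht,
      mul_one, mul_one]
  rw [real_inner_smul_left, le_inv_mul_iff₀ (norm_pos_iff.mpr hw), inner_add_left,
    real_inner_smul_left, real_inner_smul_left]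
  nlinarith [mul_le_mul_of_nonneg_left hak hs, mul_le_mul_of_nonneg_left hbk ht,
    mul_le_mul_of_nonneg_right hwn hε]

lemma inner_pos_of_ball_inter_subset {R : Set (Esp n)} {x₀ : Esp n} (hx₀ : ‖x₀‖ = 1) {r : ℝ}
    (hr : 0 < r) (hball : Metric.ball x₀ r ∩ unitSphere n ⊆ R) {u : Esp n}
    (hu : u ∈ innerDual R) (hu0 : u ≠ 0) : 0 < ⟪x₀, u⟫ := by
  have hx₀0 : x₀ ≠ 0 := norm_ne_zero_iff.mp (hx₀.symm ▸ one_ne_zero)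
  have hcont : ContinuousAt (fun δ : ℝ => x₀ - δ • u) 0 := by fun_prop
  have hnorm : ContinuousAt (fun δ : ℝ => normalize (x₀ - δ • u)) 0 := by
    refine ((continuous_norm.continuousAt.comp hcont).inv₀ ?_).smul hcont
    simpa using hx₀0
  have hev : ∀ᶠ δ in nhds (0 : ℝ), x₀ - δ • u ≠ 0 ∧ normalize (x₀ - δ • u) ∈ Metric.ball x₀ r :=
    (hcont.eventually_ne (by simpa using hx₀0)).and (hnorm.eventually_mem
      (Metric.isOpen_ball.mem_nhds
        (by simpa [NormedSpace.normalize_eq_self_of_norm_eq_one hx₀] using hr)))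
  obtain ⟨δ, ⟨hne, hδball⟩, hδ⟩ :=
    ((hev.filter_mono nhdsWithin_le_nhds).and (self_mem_nhdsWithin (s := Set.Ioi 0))).exists
  have hmem : normalize (x₀ - δ • u) ∈ R :=
    hball ⟨hδball, mem_unitSphere_iff.mpr (NormedSpace.norm_normalize hne)⟩
  have := ProperCone.mem_innerDual.mp hu hmem
  rw [NormedSpace.normalize, real_inner_smul_left, inner_sub_left, real_inner_smul_left,
    real_inner_self_eq_norm_sq] at this
  have h := (mul_nonneg_iff_of_pos_left (inv_pos.mpr (norm_pos_iff.mpr hne))).mp this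
  nlinarith [mul_pos (Set.mem_Ioi.mp hδ) (pow_pos (norm_pos_iff.mpr hu0) 2)]

lemma isSphConvexBody_inter_slab {R : Set (Esp n)} (hRc : IsClosed R) (hR : IsSphConvex R)
    {x₀ : Esp n} (hx₀ : x₀ ∈ R) {r : ℝ} (hr : 0 < r)
    (hball : Metric.ball x₀ r ∩ unitSphere n ⊆ R) {k : Esp n} (hk : ‖k‖ = 1) {ε : ℝ}
    (hε : 0 ≤ ε) (hεx₀ : ε < ⟪x₀, k⟫) : IsSphConvexBody (R ∩ {x | ε ≤ ⟪x, k⟫}) := by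
  obtain ⟨hRs, hanti, harc⟩ := hR
  refine ⟨hRc.inter (isClosed_le continuous_const (by fun_prop)),
    ⟨fun x hx => hRs hx.1, fun x hx hx' => hanti x hx.1 hx'.1, fun a ha b hb z hz =>
      ⟨harc a ha.1 b hb.1 hz, le_inner_of_mem_arc (mem_unitSphere_iff.mp (hRs ha.1))
        (mem_unitSphere_iff.mp (hRs hb.1)) hε ha.2 hb.2 hz⟩⟩,
    x₀, ⟨hx₀, hεx₀.le⟩, min r (⟪x₀, k⟫ - ε), lt_min hr (by linarith), ?_⟩
  rintro y ⟨hy, hys⟩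
  refine ⟨hball ⟨Metric.ball_subset_ball (min_le_left _ _) hy, hys⟩, ?_⟩
  have hyx₀ : ‖y - x₀‖ < ⟪x₀, k⟫ - ε :=
    (mem_ball_iff_norm.mp hy).trans_le (min_le_right _ _)
  have := real_inner_le_norm (x₀ - y) k
  rw [hk, mul_one, norm_sub_rev, inner_sub_left] at this
  show ε ≤ ⟪y, k⟫
  linarith

section Cone

variable {R : Set (Esp n)} (hRs : R ⊆ unitSphere n) (harc : ∀ a ∈ R, ∀ b ∈ R, arc a b ⊆ R)
include hRs harc

lemma hull_subset_setOf_eq_zero_or_normalize_mem :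
    (PointedCone.hull ℝ R : Set (Esp n)) ⊆ {z | z = 0 ∨ normalize z ∈ R} := by
  intro z hz
  induction hz using Submodule.span_induction with
  | mem x hx =>
    exact Or.inr ((NormedSpace.normalize_eq_self_of_norm_eq_one
      (mem_unitSphere_iff.mp (hRs hx))).symm ▸ hx)
  | zero => exact Or.inl rfl
  | add x y _ _ hx hy =>
    rcases hx with rfl | hx
    · simpa using hy
    rcases hy with rfl | hy
    · rw [add_zero]
      exact Or.inr hx
    by_cases hxy : x + y = 0
    · exact Or.inl hxy
    refine Or.inr (harc _ hx _ hy ⟨‖x‖, ‖y‖, norm_nonneg _, norm_nonneg _, ?_, ?_⟩) <;>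
      simp only [NormedSpace.norm_smul_normalize]
    · exact hxy
    · rfl
  | smul c x _ hx =>
    rcases hx with rfl | hx
    · exact Or.inl (smul_zero c)
    rcases eq_or_lt_of_le c.2 with hc | hc
    · exact Or.inl (by rw [← Nonneg.coe_smul, ← hc, zero_smul])
    · exact Or.inr (by rwa [← Nonneg.coe_smul, NormedSpace.normalize_smul_of_pos hc])

lemma normalize_mem_of_mem_innerDual_innerDual (hRc : IsClosed R) {y : Esp n}
    (hy : y ∈ innerDual (innerDual R)) (hy0 : y ≠ 0) : normalize y ∈ R := by
  have hyM : y ∈ closure (PointedCone.hull ℝ R : Set (Esp n)) := by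
    by_contra h
    obtain ⟨u, hu, hyu⟩ :=
      ProperCone.hyperplane_separation' (Submodule.closure (PointedCone.hull ℝ R)) h
    have huR : u ∈ innerDual R := fun x hx =>
      hu x (subset_closure (PointedCone.subset_hull hx))
    linarith [ProperCone.mem_innerDual.mp hy huR, real_inner_comm u y]
  exact (closure_minimal (hull_subset_setOf_eq_zero_or_normalize_mem hRs harc)
    (isClosed_setOf_eq_zero_or_normalize_mem hRc) hyM).resolve_left hy0

lemma mem_closure_hull_of_mem_innerDual_slab (hRc : IsClosed R) {k : Esp n} {ε : ℝ}
    (hε : 0 ≤ ε) {g : Esp n} (hg : g ∈ innerDual (R ∩ {x | ε ≤ ⟪x, k⟫})) :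
    g ∈ closure (PointedCone.hull ℝ ((innerDual R : Set (Esp n)) ∪ Metric.closedBall k ε) :
      Set (Esp n)) := by
  by_contra h
  obtain ⟨y, hyM, hgy⟩ := ProperCone.hyperplane_separation'
    (Submodule.closure (PointedCone.hull ℝ ((innerDual R : Set (Esp n)) ∪ Metric.closedBall k ε))) h
  have hmem : ∀ x ∈ (innerDual R : Set (Esp n)) ∪ Metric.closedBall k ε, 0 ≤ ⟪x, y⟫ :=
    fun x hx => hyM x (subset_closure (PointedCone.subset_hull hx))
  have hy0 : y ≠ 0 := by
    rintro rfl
    simp at hgy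
  have hyn : 0 < ‖y‖ := norm_pos_iff.mpr hy0
  have hyR := normalize_mem_of_mem_innerDual_innerDual hRs harc hRc
    (fun u hu => hmem u (Or.inl hu)) hy0
  have hyk := mul_norm_le_inner_of_mem_innerDual_closedBall hε (fun c hc => hmem c (Or.inr hc))
  have hyk' : ε ≤ ⟪normalize y, k⟫ := by
    rw [NormedSpace.normalize, real_inner_smul_left, le_inv_mul_iff₀ hyn]
    linarith
  have := ProperCone.mem_innerDual.mp hg ⟨hyR, hyk'⟩
  rw [NormedSpace.normalize, real_inner_smul_left, real_inner_comm] at this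
  linarith [(mul_nonneg_iff_of_pos_left (inv_pos.mpr hyn)).mp this]

end Cone

section Dual

variable {R : Set (Esp n)} (hR : IsCompact R) (hRs : R ⊆ unitSphere n) {x₀ : Esp n}
  (hx₀ : x₀ ∈ R) (hpos : ∀ u ∈ innerDual R, u ≠ 0 → 0 < ⟪x₀, u⟫)
include hR hRs hx₀ hpos

lemma sdist_le_of_supports_of_widthAt_le {k₀ : Esp n} (hk₀ : Supports k₀ R) {b : ℝ}
    (hb : b ≤ widthAt R k₀) (hbπ : b ≤ π) {u : Esp n} (hu : ‖u‖ = 1) (huR : u ∈ innerDual R) :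
    sdist k₀ u ≤ π - b := by
  have hk₀1 := hk₀.norm_eq_one
  refine sdist_le_of_mem_innerDual hR hRs hk₀1 (neg_notMem_innerDual hx₀
    (hpos k₀ hk₀.mem_innerDual (norm_ne_zero_iff.mp (hk₀1.symm ▸ one_ne_zero))))
    (by linarith) (fun k hk h h' => ?_) hu huR
  have := hb.trans (widthAt_le_luneThickness hk h h')
  rw [luneThickness_eq hk₀1 hk.norm_eq_one (Ne.symm h) fun h'' => h' (by rw [h'', neg_neg])]
    at this
  linarith

lemma sdist_le_pi_sub_thickness {u v : Esp n} (hu : ‖u‖ = 1) (huR : u ∈ innerDual R)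
    (hv : ‖v‖ = 1) (hvR : v ∈ innerDual R) : sdist u v ≤ π - thickness R := by
  refine sdist_le_of_mem_innerDual hR hRs hu (neg_notMem_innerDual hx₀
    (hpos u huR (norm_ne_zero_iff.mp (hu.symm ▸ one_ne_zero))))
    (by linarith [thickness_le_pi R]) (fun k hk _ _ => ?_) hv hvR
  rw [sdist_comm]
  exact sdist_le_of_supports_of_widthAt_le hR hRs hx₀ hpos hk (thickness_le_widthAt hk)
    (thickness_le_pi R) hu huR

lemma cos_mul_le_inner_of_mem_innerDual {p q : Esp n} (hp : p ∈ innerDual R)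
    (hq : q ∈ innerDual R) : cos (π - thickness R) * (‖p‖ * ‖q‖) ≤ ⟪p, q⟫ := by
  refine mul_norm_le_inner_of_normalize fun hp0 hq0 => ?_
  have hp1 := NormedSpace.norm_normalize hp0
  have hq1 := NormedSpace.norm_normalize hq0
  rw [← cos_sdist hp1 hq1]
  exact cos_le_cos_of_nonneg_of_le_pi (arccos_nonneg _) (by linarith [thickness_nonneg R])
    (sdist_le_pi_sub_thickness hR hRs hx₀ hpos hp1 ((innerDual R).smul_mem hp (by positivity))
      hq1 ((innerDual R).smul_mem hq (by positivity)))

lemma cos_mul_le_inner_of_supports {k₀ : Esp n} (hk₀ : Supports k₀ R) {p : Esp n}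
    (hp : p ∈ innerDual R) : cos (π - widthAt R k₀) * ‖p‖ ≤ ⟪p, k₀⟫ := by
  have hk₀1 := hk₀.norm_eq_one
  have := mul_norm_le_inner_of_normalize (γ := cos (π - widthAt R k₀)) (p := p) (q := k₀)
    fun hp0 _ => by
      have hp1 := NormedSpace.norm_normalize hp0
      rw [NormedSpace.normalize_eq_self_of_norm_eq_one hk₀1, real_inner_comm,
        ← cos_sdist hk₀1 hp1]
      exact cos_le_cos_of_nonneg_of_le_pi (arccos_nonneg _)
        (by linarith [widthAt_nonneg R k₀]) (sdist_le_of_supports_of_widthAt_le hR hRs hx₀ hpos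
          hk₀ le_rfl (widthAt_le_pi R k₀) hp1 ((innerDual R).smul_mem hp (by positivity)))
  rwa [hk₀1, mul_one] at this

/-- Cutting `R` by a thin slab along the boundary of a supporting hemisphere `H(k₀)` with
`width_{H(k₀)}(R) > Δ(R) ≥ π/2` does not create lunes thinner than `Δ(R)`. -/
lemma thickness_le_luneThickness_of_supports_slab
    (harc : ∀ a ∈ R, ∀ b ∈ R, arc a b ⊆ R) {k₀ : Esp n} (hk₀ : Supports k₀ R) {ε : ℝ}
    (hε : 0 ≤ ε) (hγ : 0 ≤ cos (π - thickness R))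
    (hγε : cos (π - thickness R) + 4 * ε ≤ cos (π - widthAt R k₀)) {g w : Esp n}
    (hg : Supports g (R ∩ {x | ε ≤ ⟪x, k₀⟫})) (hw : Supports w (R ∩ {x | ε ≤ ⟪x, k₀⟫}))
    (hwg : w ≠ g) (hwg' : w ≠ -g) : thickness R ≤ luneThickness g w := by
  have hg1 := hg.norm_eq_one
  have hw1 := hw.norm_eq_one
  have hgw := mul_norm_le_inner_of_mem_closure_hull_union_closedBall hk₀.norm_eq_one hγ hε
    (by linarith [cos_le_one (π - widthAt R k₀)])
    (fun p hp q hq => cos_mul_le_inner_of_mem_innerDual hR hRs hx₀ hpos hp hq)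
    (fun p hp => by nlinarith [cos_mul_le_inner_of_supports hR hRs hx₀ hpos hk₀ hp, norm_nonneg p])
    (mem_closure_hull_of_mem_innerDual_slab hRs harc hR.isClosed hε hg.mem_innerDual)
    (mem_closure_hull_of_mem_innerDual_slab hRs harc hR.isClosed hε hw.mem_innerDual)
  rw [hg1, hw1, mul_one, mul_one, ← cos_sdist hg1 hw1] at hgw
  have : sdist g w ≤ π - thickness R := (strictAntiOn_cos.le_iff_ge
    ⟨by linarith [thickness_le_pi R], by linarith [thickness_nonneg R]⟩
    ⟨arccos_nonneg _, arccos_le_pi _⟩).mp hgw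
  rw [luneThickness_eq hg1 hw1 (Ne.symm hwg) fun h => hwg' (by rw [h, neg_neg])]
  linarith

end Dual

lemma exists_supports_slab_luneThickness_lt (hn : 3 ≤ n) {R : Set (Esp n)} (hR : IsReduced R)
    {x₀ : Esp n} (hx₀ : x₀ ∈ R) {r : ℝ} (hr : 0 < r)
    (hball : Metric.ball x₀ r ∩ unitSphere n ⊆ R) {k₀ : Esp n} (hk₀ : Supports k₀ R) {ε : ℝ}
    (hε : 0 < ε) (hεx₀ : ε < ⟪x₀, k₀⟫) :
    ∃ g w, Supports g (R ∩ {x | ε ≤ ⟪x, k₀⟫}) ∧ Supports w (R ∩ {x | ε ≤ ⟪x, k₀⟫}) ∧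
      w ≠ g ∧ w ≠ -g ∧ luneThickness g w < thickness R := by
  obtain ⟨⟨hRc, hRcv, -⟩, hred⟩ := hR
  have hZ := isSphConvexBody_inter_slab hRc hRcv hx₀ hr hball hk₀.norm_eq_one hε.le hεx₀
  have hZR : R ∩ {x | ε ≤ ⟪x, k₀⟫} ≠ R := fun h => by
    obtain ⟨p, hp, hp0⟩ := hk₀.exists_inner_eq_zero
    have : ε ≤ ⟪p, k₀⟫ := (h.symm ▸ hp : p ∈ R ∩ {x | ε ≤ ⟪x, k₀⟫}).2
    linarith
  obtain ⟨v₁, v₂, hv₁, hv₂, hv, hv'⟩ := exists_two_supports hn hZ.isCompact hZ.2.1.1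
    ⟨x₀, hx₀, hεx₀.le⟩ hk₀.norm_eq_one fun x hx => hε.trans_le hx.2
  exact exists_luneThickness_lt_of_thickness_lt (hred _ hZ Set.inter_subset_left hZR)
    hv₁ hv₂ hv hv'

end SphericalGeom

/-- A reduced spherically convex body `R ⊂ S^d` with `Δ(R) ≥ π/2` is a
body of constant width `Δ(R)`. -/
theorem constWidth_of_reduced_thickness_ge (d : ℕ) (hd : 2 ≤ d)
    (R : Set (Esp (d + 1))) (hR : IsReduced R)
    (hth : Real.pi / 2 ≤ thickness R) :
    IsConstWidth R (thickness R) := by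
  intro k₀ hk₀
  refine le_antisymm ?_ (thickness_le_widthAt hk₀)
  by_contra! hlt
  obtain ⟨-, ⟨hRs, -, harc⟩, x₀, hx₀, r, hr, hball⟩ := hR.1
  have hpos : ∀ u ∈ innerDual R, u ≠ 0 → 0 < ⟪x₀, u⟫ := fun u hu hu0 =>
    inner_pos_of_ball_inter_subset (mem_unitSphere_iff.mp (hRs hx₀)) hr hball hu hu0
  have hγ : 0 ≤ cos (π - thickness R) :=
    cos_nonneg_of_mem_Icc ⟨by linarith [thickness_le_pi R], by linarith⟩
  have hγw : cos (π - thickness R) < cos (π - widthAt R k₀) :=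
    cos_lt_cos_of_nonneg_of_le_pi (by linarith [widthAt_le_pi R k₀])
      (by linarith [thickness_nonneg R]) (by linarith)
  have hx₀k₀ : 0 < ⟪x₀, k₀⟫ := hpos k₀ hk₀.mem_innerDual
    (norm_ne_zero_iff.mp (hk₀.norm_eq_one.symm ▸ one_ne_zero))
  obtain ⟨ε, hε, hεx₀, hεγ⟩ : ∃ ε, 0 < ε ∧ ε < ⟪x₀, k₀⟫ ∧
      cos (π - thickness R) + 4 * ε ≤ cos (π - widthAt R k₀) := by
    set δ := cos (π - widthAt R k₀) - cos (π - thickness R)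
    refine ⟨min (⟪x₀, k₀⟫ / 2) (δ / 4), lt_min (by linarith) (by linarith),
      (min_le_left _ _).trans_lt (by linarith), ?_⟩
    linarith [min_le_right (⟪x₀, k₀⟫ / 2) (δ / 4)]
  obtain ⟨g, w, hg, hw, hwg, hwg', hgw⟩ :=
    exists_supports_slab_luneThickness_lt (by omega) hR hx₀ hr hball hk₀ hε hεx₀
  exact hgw.not_ge (thickness_le_luneThickness_of_supports_slab hR.1.isCompact hRs hx₀ hpos
    harc hk₀ hε.le hγ hεγ hg hw hwg hwg')
end
end
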